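/- Let $S$ be a subsemiring of a commutative ring $A$ (containing 0 and 1, closed under addition and multiplication). Then $O(S,1)$ is a subring of $A$, and for every $u \in S$, the set $O(S,u)$ is an $O(S,1)$-submodule of $A$. -/
import Mathlib


/-- `O(M, u) = {a ∈ A : ∃ n ∈ ℕ, nu + a ∈ M and nu - a ∈ M}`. -/
def boundedBy {A : Type*} [CommRing A] (M : Set A) (u : A) : Set A :=
  {a | ∃ n : ℕ, n • u + a ∈ M ∧ n • u - a ∈ M}

private lemma nsmul_mem_aux {A : Type*} [CommRing A] {S : Set A}
    (h0 : (0 : A) ∈ S) (hadd : ∀ x ∈ S, ∀ y ∈ S, x + y ∈ S) :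
    ∀ n : ℕ, ∀ x ∈ S, n • x ∈ S := by
  intro n
  induction n with
  | zero => intro x _; simpa using h0
  | succ k ih =>
    intro x hx
    rw [succ_nsmul]
    exact hadd _ (ih x hx) _ hx

private lemma boundedBy_zero_mem {A : Type*} [CommRing A] {S : Set A}
    (h0 : (0 : A) ∈ S) (u : A) : (0 : A) ∈ boundedBy S u :=
  ⟨0, by simpa using h0, by simpa using h0⟩

private lemma boundedBy_add_mem {A : Type*} [CommRing A] {S : Set A}
    (hadd : ∀ x ∈ S, ∀ y ∈ S, x + y ∈ S) {u : A}
    {x y : A} (hx : x ∈ boundedBy S u) (hy : y ∈ boundedBy S u) :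
    x + y ∈ boundedBy S u := by
  obtain ⟨n, hn1, hn2⟩ := hx
  obtain ⟨m, hm1, hm2⟩ := hy
  refine ⟨n + m, ?_, ?_⟩
  · have := hadd _ hn1 _ hm1
    have heq : (n + m) • u + (x + y) = (n • u + x) + (m • u + y) := by
      rw [add_nsmul]; ring
    rwa [heq]
  · have := hadd _ hn2 _ hm2
    have heq : (n + m) • u - (x + y) = (n • u - x) + (m • u - y) := by
      rw [add_nsmul]; ring
    rwa [heq]

private lemma boundedBy_neg_mem {A : Type*} [CommRing A] {S : Set A} {u : A}
    {x : A} (hx : x ∈ boundedBy S u) : -x ∈ boundedBy S u := by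
  obtain ⟨n, hn1, hn2⟩ := hx
  exact ⟨n, by simpa [sub_eq_add_neg] using hn2, by simpa [sub_eq_add_neg] using hn1⟩

private lemma boundedBy_mul_mem {A : Type*} [CommRing A] {S : Set A}
    (h0 : (0 : A) ∈ S) (hadd : ∀ x ∈ S, ∀ y ∈ S, x + y ∈ S)
    (hmul : ∀ x ∈ S, ∀ y ∈ S, x * y ∈ S) {u : A} (hu : u ∈ S)
    {a x : A} (ha : a ∈ boundedBy S 1) (hx : x ∈ boundedBy S u) :
    a * x ∈ boundedBy S u := by
  obtain ⟨n, hp, hq⟩ := ha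
  obtain ⟨m, hr, hs⟩ := hx
  have hmu : (m : ℕ) • u ∈ S := nsmul_mem_aux h0 hadd m u hu
  refine ⟨3 * (n * m), ?_, ?_⟩
  · have hK : ((n • (1 : A) + a) * (m • u + x) + n • (m • u - x)
        + (n • (1 : A) - a) * (m • u)) ∈ S :=
      hadd _ (hadd _ (hmul _ hp _ hr) _ (nsmul_mem_aux h0 hadd n _ hs)) _
        (hmul _ hq _ hmu)
    have heq : (3 * (n * m)) • u + a * x
        = (n • (1 : A) + a) * (m • u + x) + n • (m • u - x)
          + (n • (1 : A) - a) * (m • u) := by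
      simp only [nsmul_eq_mul]
      push_cast
      ring
    rwa [heq]
  · have hK : ((n • (1 : A) + a) * (m • u - x) + n • (m • u + x)
        + (n • (1 : A) - a) * (m • u)) ∈ S :=
      hadd _ (hadd _ (hmul _ hp _ hs) _ (nsmul_mem_aux h0 hadd n _ hr)) _
        (hmul _ hq _ hmu)
    have heq : (3 * (n * m)) • u - a * x
        = (n • (1 : A) + a) * (m • u - x) + n • (m • u + x)
          + (n • (1 : A) - a) * (m • u) := by
      simp only [nsmul_eq_mul]
      push_cast
      ring
    rwa [heq]

/-- If `S` is a subsemiring of `A`, then `O(S,1)` is a subring of `A`, and for every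
`u ∈ S` the set `O(S,u)` is an `O(S,1)`-submodule of `A`. -/
theorem boundedBy_semiring_subring_and_submodule {A : Type*} [CommRing A] (S : Set A)
    (h0 : (0 : A) ∈ S) (h1 : (1 : A) ∈ S)
    (hadd : ∀ x ∈ S, ∀ y ∈ S, x + y ∈ S)
    (hmul : ∀ x ∈ S, ∀ y ∈ S, x * y ∈ S) :
    (∃ B : Subring A, (B : Set A) = boundedBy S 1) ∧
    ∀ u ∈ S,
      (0 : A) ∈ boundedBy S u ∧
      (∀ x ∈ boundedBy S u, ∀ y ∈ boundedBy S u, x + y ∈ boundedBy S u) ∧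
      (∀ x ∈ boundedBy S u, -x ∈ boundedBy S u) ∧
      (∀ a ∈ boundedBy S 1, ∀ x ∈ boundedBy S u, a * x ∈ boundedBy S u) := by
  constructor
  · refine ⟨{ carrier := boundedBy S 1
              zero_mem' := boundedBy_zero_mem h0 1
              one_mem' := ⟨1, by simpa using hadd _ h1 _ h1, by simpa using h0⟩
              add_mem' := fun hx hy => boundedBy_add_mem hadd hx hy
              neg_mem' := fun hx => boundedBy_neg_mem hx
              mul_mem' := fun hx hy => boundedBy_mul_mem h0 hadd hmul h1 hx hy }, rfl⟩
  · intro u hu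
    exact ⟨boundedBy_zero_mem h0 u,
      fun x hx y hy => boundedBy_add_mem hadd hx hy,
      fun x hx => boundedBy_neg_mem hx,
      fun a ha x hx => boundedBy_mul_mem h0 hadd hmul hu ha hx⟩
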